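/- arXiv:1908.10111 — 2 statements merged into one kernel-verified Lean document; each statement's English description precedes it below -/
import Mathlib

section
/- Suppose u_I and u_II both satisfy, for some t* ∈ (0,T], the energy identity E(u_i(t*)) + ½∫₀^{t*} (‖u̇_i‖²_{L²} + |∂F|²_{L²₊}(t, u_i(t))) dt − ∫₀^{t*} ⟨f(t), u̇_i(t)⟩ dt = E(u₀), with the same initial datum u₀, and suppose u_I(t*) ≠ u_II(t*). Then the midpoint curve u_♮ = ½(u_I + u_II) satisfies the strict inequality E(u_♮(t*)) + ½∫₀^{t*}(‖u̇_♮‖²_{L²} + |∂F|²_{L²₊}(t, u_♮(t))) dt − ∫₀^{t*} ⟨f(t), u̇_♮(t)⟩ dt < E(u₀). -/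
/-!
Apart from `E(u(t*))`, every term of the energy functional is convex in the curve: the kinetic
term `½‖u̇‖²` pointwise, the squared slope because `|∂F|_{L²₊}(t, ·)` is a nonnegative supremum
of affine functionals, and the force term is linear. Averaging the two energy identities
therefore bounds the midpoint's left-hand side by `E(u₀)` plus the defect
`E(u_♮(t*)) - ½E(u_I(t*)) - ½E(u_II(t*)) = -⅛ a(u_I - u_II, u_I - u_II)` of the quadratic
energy, which is negative by coercivity.
-/

open MeasureTheory

/-- The set whose supremum is the unilateral slope
`|∂F|_{L²₊}(t,w) = sup { −a(w,z) + ⟨f(t), z⟩ : z ∈ H¹₀, z ≥ 0, ‖z‖_{L²} ≤ 1 }`. -/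
def slopeSet {α : Type*} [MeasurableSpace α] {μ : Measure α}
    {V : Type*} [NormedAddCommGroup V] [NormedSpace ℝ V]
    (ι : V →L[ℝ] Lp ℝ 2 μ) (a : V →L[ℝ] V →L[ℝ] ℝ) (ft : Lp ℝ 2 μ) (w : V) : Set ℝ :=
  {r : ℝ | ∃ z : V, 0 ≤ ι z ∧ ‖ι z‖ ≤ 1 ∧ r = -(a w z) + (inner ℝ ft (ι z) : ℝ)}

lemma sq_le_of_le_add_div_two {m p q : ℝ} (hm : 0 ≤ m) (h : m ≤ (p + q) / 2) :
    m ^ 2 ≤ (p ^ 2 + q ^ 2) / 2 := by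
  nlinarith [sq_nonneg (p - q)]

lemma norm_half_smul_add_sq_le {E : Type*} [SeminormedAddCommGroup E] [NormedSpace ℝ E]
    (x y : E) : ‖(1/2 : ℝ) • (x + y)‖ ^ 2 ≤ (‖x‖ ^ 2 + ‖y‖ ^ 2) / 2 := by
  refine sq_le_of_le_add_div_two (norm_nonneg _) ?_
  rw [norm_smul, Real.norm_of_nonneg (by norm_num : (0 : ℝ) ≤ 1/2)]
  linarith [norm_add_le x y]

/-- No integrability of `f` is needed: a nonintegrable `f` has integral `0`. -/
lemma integral_le_of_nonneg_of_le_on_Ioc {μ : Measure ℝ} {f g : ℝ → ℝ} {a b : ℝ} (hab : a ≤ b)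
    (hf : ∀ t ∈ Set.Ioc a b, 0 ≤ f t) (hg : IntervalIntegrable g μ a b)
    (hfg : ∀ t ∈ Set.Ioc a b, f t ≤ g t) :
    ∫ t in a..b, f t ∂μ ≤ ∫ t in a..b, g t ∂μ := by
  rw [intervalIntegral.integral_of_le hab, intervalIntegral.integral_of_le hab]
  exact integral_mono_of_nonneg ((ae_restrict_iff' measurableSet_Ioc).2 (.of_forall hf)) hg.1
    ((ae_restrict_iff' measurableSet_Ioc).2 (.of_forall hfg))

section Bilinear

variable {V : Type*} [NormedAddCommGroup V] [NormedSpace ℝ V] (a : V →L[ℝ] V →L[ℝ] ℝ)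

lemma apply_half_smul_add_self (x y : V) :
    a ((1/2 : ℝ) • (x + y)) ((1/2 : ℝ) • (x + y)) =
      (a x x + a y y) / 2 - a (x - y) (x - y) / 4 := by
  simp only [map_smul, map_add, map_sub, add_apply, sub_apply, smul_apply, smul_eq_mul]
  ring

lemma apply_half_smul_add_self_lt {c : ℝ} (hc : 0 < c) (hcoer : ∀ w : V, c * ‖w‖ ^ 2 ≤ a w w)
    {x y : V} (hxy : x ≠ y) :
    a ((1/2 : ℝ) • (x + y)) ((1/2 : ℝ) • (x + y)) < (a x x + a y y) / 2 := by
  have hpos : 0 < a (x - y) (x - y) :=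
    (mul_pos hc (pow_pos (norm_pos_iff.2 (sub_ne_zero.2 hxy)) 2)).trans_le (hcoer _)
  rw [apply_half_smul_add_self]
  linarith

end Bilinear

section SlopeSet

variable {α : Type*} [MeasurableSpace α] {μ : Measure α}
  {V : Type*} [NormedAddCommGroup V] [NormedSpace ℝ V]
  (ι : V →L[ℝ] Lp ℝ 2 μ) (a : V →L[ℝ] V →L[ℝ] ℝ) (ft : Lp ℝ 2 μ)

lemma zero_mem_slopeSet (w : V) : (0 : ℝ) ∈ slopeSet ι a ft w :=
  ⟨0, by simp, by simp, by simp⟩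

/-- Also for an unbounded slope set, where `sSup` is the junk value `0`. -/
lemma sSup_slopeSet_nonneg (w : V) : 0 ≤ sSup (slopeSet ι a ft w) :=
  Real.sSup_nonneg' ⟨0, zero_mem_slopeSet ι a ft w, le_rfl⟩

lemma sSup_slopeSet_half_smul_add_le {x y : V} (hx : BddAbove (slopeSet ι a ft x))
    (hy : BddAbove (slopeSet ι a ft y)) :
    sSup (slopeSet ι a ft ((1/2 : ℝ) • (x + y))) ≤
      (sSup (slopeSet ι a ft x) + sSup (slopeSet ι a ft y)) / 2 := by
  refine csSup_le ⟨0, zero_mem_slopeSet ι a ft _⟩ ?_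
  rintro _ ⟨z, hz0, hz1, rfl⟩
  have hxz := le_csSup hx ⟨z, hz0, hz1, rfl⟩
  have hyz := le_csSup hy ⟨z, hz0, hz1, rfl⟩
  simp only [map_smul, map_add, add_apply, smul_apply, smul_eq_mul]
  linarith

lemma sq_sSup_slopeSet_half_smul_add_le {x y : V} (hx : BddAbove (slopeSet ι a ft x))
    (hy : BddAbove (slopeSet ι a ft y)) :
    sSup (slopeSet ι a ft ((1/2 : ℝ) • (x + y))) ^ 2 ≤
      (sSup (slopeSet ι a ft x) ^ 2 + sSup (slopeSet ι a ft y) ^ 2) / 2 :=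
  sq_le_of_le_add_div_two (sSup_slopeSet_nonneg ι a ft _)
    (sSup_slopeSet_half_smul_add_le ι a ft hx hy)

end SlopeSet

theorem midpoint_strict_energy_inequality_general
    {α : Type*} [MeasurableSpace α] (μ : Measure α)
    {V : Type*} [NormedAddCommGroup V] [NormedSpace ℝ V]
    (ι : V →L[ℝ] Lp ℝ 2 μ)
    (a : V →L[ℝ] V →L[ℝ] ℝ)
    (c : ℝ) (hc : 0 < c) (hcoer : ∀ w : V, c * ‖w‖ ^ 2 ≤ a w w)
    (f : ℝ → Lp ℝ 2 μ) (tstar : ℝ) (htstar : 0 < tstar) (u₀ : V)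
    (uI uII : ℝ → V) (duI duII : ℝ → Lp ℝ 2 μ)
    (hbddI : ∀ t ∈ Set.Ioc (0:ℝ) tstar, BddAbove (slopeSet ι a (f t) (uI t)))
    (hbddII : ∀ t ∈ Set.Ioc (0:ℝ) tstar, BddAbove (slopeSet ι a (f t) (uII t)))
    (hintI : IntervalIntegrable (fun t => ‖duI t‖ ^ 2) volume 0 tstar)
    (hintII : IntervalIntegrable (fun t => ‖duII t‖ ^ 2) volume 0 tstar)
    (hslI : IntervalIntegrable (fun t => (sSup (slopeSet ι a (f t) (uI t))) ^ 2) volume 0 tstar)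
    (hslII : IntervalIntegrable (fun t => (sSup (slopeSet ι a (f t) (uII t))) ^ 2) volume 0 tstar)
    (hfI : IntervalIntegrable (fun t => (inner ℝ (f t) (duI t) : ℝ)) volume 0 tstar)
    (hfII : IntervalIntegrable (fun t => (inner ℝ (f t) (duII t) : ℝ)) volume 0 tstar)
    (hEI : (1/2) * a (uI tstar) (uI tstar) +
        (∫ t in (0:ℝ)..tstar,
          ((1/2) * ‖duI t‖ ^ 2 + (1/2) * (sSup (slopeSet ι a (f t) (uI t))) ^ 2)) -
        (∫ t in (0:ℝ)..tstar, (inner ℝ (f t) (duI t) : ℝ)) = (1/2) * a u₀ u₀)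
    (hEII : (1/2) * a (uII tstar) (uII tstar) +
        (∫ t in (0:ℝ)..tstar,
          ((1/2) * ‖duII t‖ ^ 2 + (1/2) * (sSup (slopeSet ι a (f t) (uII t))) ^ 2)) -
        (∫ t in (0:ℝ)..tstar, (inner ℝ (f t) (duII t) : ℝ)) = (1/2) * a u₀ u₀)
    (hne : uI tstar ≠ uII tstar) :
    (1/2) * a ((1/2 : ℝ) • (uI tstar + uII tstar)) ((1/2 : ℝ) • (uI tstar + uII tstar)) +
        (∫ t in (0:ℝ)..tstar,
          ((1/2) * ‖(1/2 : ℝ) • (duI t + duII t)‖ ^ 2 +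
            (1/2) * (sSup (slopeSet ι a (f t) ((1/2 : ℝ) • (uI t + uII t)))) ^ 2)) -
        (∫ t in (0:ℝ)..tstar, (inner ℝ (f t) ((1/2 : ℝ) • (duI t + duII t)) : ℝ)) <
      (1/2) * a u₀ u₀ := by
  have hdissI := (hintI.const_mul (1/2 : ℝ)).add (hslI.const_mul (1/2 : ℝ))
  have hdissII := (hintII.const_mul (1/2 : ℝ)).add (hslII.const_mul (1/2 : ℝ))
  have hdiss : ∫ t in (0:ℝ)..tstar, ((1/2) * ‖(1/2 : ℝ) • (duI t + duII t)‖ ^ 2 +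
        (1/2) * (sSup (slopeSet ι a (f t) ((1/2 : ℝ) • (uI t + uII t)))) ^ 2) ≤
      ((∫ t in (0:ℝ)..tstar,
          ((1/2) * ‖duI t‖ ^ 2 + (1/2) * (sSup (slopeSet ι a (f t) (uI t))) ^ 2)) +
        ∫ t in (0:ℝ)..tstar,
          ((1/2) * ‖duII t‖ ^ 2 + (1/2) * (sSup (slopeSet ι a (f t) (uII t))) ^ 2)) / 2 := by
    rw [← intervalIntegral.integral_add hdissI hdissII, ← intervalIntegral.integral_div]
    refine integral_le_of_nonneg_of_le_on_Ioc htstar.le (fun t _ => by positivity)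
      ((hdissI.add hdissII).div_const 2) fun t ht => ?_
    have hkin := norm_half_smul_add_sq_le (duI t) (duII t)
    have hslope := sq_sSup_slopeSet_half_smul_add_le ι a (f t) (hbddI t ht) (hbddII t ht)
    linarith
  have hforce : ∫ t in (0:ℝ)..tstar, (inner ℝ (f t) ((1/2 : ℝ) • (duI t + duII t)) : ℝ) =
      ((∫ t in (0:ℝ)..tstar, (inner ℝ (f t) (duI t) : ℝ)) +
        ∫ t in (0:ℝ)..tstar, (inner ℝ (f t) (duII t) : ℝ)) / 2 := by
    simp only [real_inner_smul_right, inner_add_right, intervalIntegral.integral_const_mul,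
      intervalIntegral.integral_add hfI hfII]
    ring
  have henergy := apply_half_smul_add_self_lt a hc hcoer hne
  linarith

/-- Strict convexity estimate behind uniqueness (Gigli's argument): if `u_I` and `u_II` both
satisfy the energy identity
`E(u_i(t*)) + ∫₀^{t*} (½‖u̇_i‖² + ½|∂F|²_{L²₊}(t,u_i)) − ∫₀^{t*} ⟨f, u̇_i⟩ = E(u₀)`
with the same initial datum `u₀`, and `u_I(t*) ≠ u_II(t*)`, then the midpoint curve
`u_♮ = ½(u_I + u_II)` (with speed `½(u̇_I + u̇_II)`) satisfies the corresponding strict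
inequality `< E(u₀)`.  Here `E(w) = ½a(w,w)` with `a` coercive continuous symmetric. -/
theorem midpoint_strict_energy_inequality
    {α : Type*} [MeasurableSpace α] (μ : Measure α)
    {V : Type*} [NormedAddCommGroup V] [NormedSpace ℝ V]
    (ι : V →L[ℝ] Lp ℝ 2 μ)
    (a : V →L[ℝ] V →L[ℝ] ℝ) (hsymm : ∀ u v : V, a u v = a v u)
    (c : ℝ) (hc : 0 < c) (hcoer : ∀ w : V, c * ‖w‖ ^ 2 ≤ a w w)
    (f : ℝ → Lp ℝ 2 μ) (tstar : ℝ) (htstar : 0 < tstar) (u₀ : V)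
    (uI uII : ℝ → V) (duI duII : ℝ → Lp ℝ 2 μ)
    (hbddI : ∀ t ∈ Set.Ioc (0:ℝ) tstar, BddAbove (slopeSet ι a (f t) (uI t)))
    (hbddII : ∀ t ∈ Set.Ioc (0:ℝ) tstar, BddAbove (slopeSet ι a (f t) (uII t)))
    (hmI : AEStronglyMeasurable duI (volume.restrict (Set.Ioc 0 tstar)))
    (hmII : AEStronglyMeasurable duII (volume.restrict (Set.Ioc 0 tstar)))
    (hintI : IntervalIntegrable (fun t => ‖duI t‖ ^ 2) volume 0 tstar)
    (hintII : IntervalIntegrable (fun t => ‖duII t‖ ^ 2) volume 0 tstar)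
    (hslI : IntervalIntegrable (fun t => (sSup (slopeSet ι a (f t) (uI t))) ^ 2) volume 0 tstar)
    (hslII : IntervalIntegrable (fun t => (sSup (slopeSet ι a (f t) (uII t))) ^ 2) volume 0 tstar)
    (hslM : IntervalIntegrable
      (fun t => (sSup (slopeSet ι a (f t) ((1/2 : ℝ) • (uI t + uII t)))) ^ 2) volume 0 tstar)
    (hfI : IntervalIntegrable (fun t => (inner ℝ (f t) (duI t) : ℝ)) volume 0 tstar)
    (hfII : IntervalIntegrable (fun t => (inner ℝ (f t) (duII t) : ℝ)) volume 0 tstar)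
    (hEI : (1/2) * a (uI tstar) (uI tstar) +
        (∫ t in (0:ℝ)..tstar,
          ((1/2) * ‖duI t‖ ^ 2 + (1/2) * (sSup (slopeSet ι a (f t) (uI t))) ^ 2)) -
        (∫ t in (0:ℝ)..tstar, (inner ℝ (f t) (duI t) : ℝ)) = (1/2) * a u₀ u₀)
    (hEII : (1/2) * a (uII tstar) (uII tstar) +
        (∫ t in (0:ℝ)..tstar,
          ((1/2) * ‖duII t‖ ^ 2 + (1/2) * (sSup (slopeSet ι a (f t) (uII t))) ^ 2)) -
        (∫ t in (0:ℝ)..tstar, (inner ℝ (f t) (duII t) : ℝ)) = (1/2) * a u₀ u₀)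
    (hne : uI tstar ≠ uII tstar) :
    (1/2) * a ((1/2 : ℝ) • (uI tstar + uII tstar)) ((1/2 : ℝ) • (uI tstar + uII tstar)) +
        (∫ t in (0:ℝ)..tstar,
          ((1/2) * ‖(1/2 : ℝ) • (duI t + duII t)‖ ^ 2 +
            (1/2) * (sSup (slopeSet ι a (f t) ((1/2 : ℝ) • (uI t + uII t)))) ^ 2)) -
        (∫ t in (0:ℝ)..tstar, (inner ℝ (f t) ((1/2 : ℝ) • (duI t + duII t)) : ℝ)) <
      (1/2) * a u₀ u₀ :=
  midpoint_strict_energy_inequality_general μ ι a c hc hcoer f tstar htstar u₀ uI uII duI duII hbddI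
    hbddII hintI hintII hslI hslII hfI hfII hEI hEII hne
end

section
/- Consider the constrained incremental problem u_{k+1} ∈ argmin{F_n(t_{k+1}, u) + (1/(2τ))|u − u_k|²_{L²₊} : u ∈ H¹₀} where |w|_{L²₊} = ‖w‖_{L²} if w ≥ 0 and +∞ otherwise. Then the minimizer satisfies u_{k+1} ≥ u_k, the identity ‖u_{k+1} − u_k‖²_{L²}/τ² = −dF_n(t_{k+1}, u_{k+1})[(u_{k+1} − u_k)/τ], and ‖(u_{k+1} − u_k)/τ‖_{L²} = |∂F_n|_{L²₊}(t_{k+1}, u_{k+1}), where |∂F_n|_{L²₊}(t, w) = sup{−dF_n(t,w)[z] : z ∈ H¹₀, z ≥ 0, ‖z‖_{L²} ≤ 1}. -/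
/-!
The admissible set `{w | ι u₀ ≤ ι w}` is where the constrained functional is finite, and `u₀` lies
in it, so the minimizer does too. On this convex set the functional is a quadratic polynomial along
segments, and minimality gives the variational inequality
`dF(u₁)[v − u₁] + τ⁻¹ ⟪u₁ − u₀, v − u₁⟫ ≥ 0`. Testing with `v = u₀` and `v = 2u₁ − u₀` yields
`dF(u₁)[u₁ − u₀] = −τ⁻¹ ‖u₁ − u₀‖²`; testing with `v = u₁ + z`, `z ≥ 0`, and Cauchy–Schwarz bound
`−dF(u₁)[z]` by `τ⁻¹ ‖u₁ − u₀‖ ‖z‖`, with equality at `z = (u₁ − u₀)/‖u₁ − u₀‖`.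
-/

open MeasureTheory Filter Topology
open scoped RealInnerProductSpace ENNReal

instance MeasureTheory.Lp.instPosSMulMono {α : Type*} [MeasurableSpace α] {μ : Measure α}
    {p : ℝ≥0∞} : PosSMulMono ℝ (Lp ℝ p μ) :=
  PosSMulMono.of_smul_nonneg fun c hc f hf => by
    rw [← Lp.coeFn_nonneg] at hf ⊢
    filter_upwards [hf, Lp.coeFn_smul c f] with x hx hcx
    rw [hcx]
    exact smul_nonneg hc hx

theorem WithTop.mem_and_isMinOn_of_forall_ite_le {E β : Type*} [Preorder β] {p : E → Prop}
    [DecidablePred p] {f : E → β} {u : E} (hp : ∃ w, p w)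
    (h : ∀ w, (if p u then (f u : WithTop β) else ⊤) ≤ if p w then (f w : WithTop β) else ⊤) :
    p u ∧ IsMinOn f {w | p w} u := by
  obtain ⟨w₀, hw₀⟩ := hp
  have hu : p u := by
    by_contra hu
    simpa [hu, hw₀] using h w₀
  refine ⟨hu, fun w hw => ?_⟩
  simpa [hu, show p w from hw] using h w

theorem IsMinOn.linear_coeff_nonneg {E : Type*} [AddCommGroup E] [Module ℝ E] {K : Set E}
    {f : E → ℝ} {u z : E} (hK : Convex ℝ K) (hu : u ∈ K) (hz : z ∈ K) (hmin : IsMinOn f K u)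
    {L Q : ℝ} (hf : ∀ s : ℝ, f (u + s • (z - u)) = f u + s * L + s ^ 2 * Q) : 0 ≤ L := by
  have hslope : ∀ᶠ s in 𝓝[>] (0 : ℝ), 0 ≤ L + s * Q := by
    filter_upwards [Ioc_mem_nhdsGT zero_lt_one] with s ⟨hs₀, hs₁⟩
    have hle : f u ≤ f (u + s • (z - u)) := hmin (hK.add_smul_sub_mem hu hz ⟨hs₀.le, hs₁⟩)
    rw [hf] at hle
    exact nonneg_of_mul_nonneg_right (by nlinarith) hs₀
  have hlim : Tendsto (fun s : ℝ => L + s * Q) (𝓝[>] 0) (𝓝 L) := by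
    have hcont : Continuous fun s : ℝ => L + s * Q := by fun_prop
    simpa using (hcont.tendsto 0).mono_left nhdsWithin_le_nhds
  exact ge_of_tendsto hlim hslope

section IncrementalEnergy

variable {V H : Type*} [AddCommGroup V] [Module ℝ V] [NormedAddCommGroup H] [InnerProductSpace ℝ H]
  (ι : V →ₗ[ℝ] H) (a : LinearMap.BilinForm ℝ V) (g : H)

/-- `dF(w)` for `F(w) = ½ a(w,w) − ⟪g, ι w⟫`. -/
noncomputable def energyDifferential (w : V) : V →ₗ[ℝ] ℝ := a w - (innerₗ H g).comp ι

@[simp]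
theorem energyDifferential_apply (w z : V) : energyDifferential ι a g w z = a w z - ⟪g, ι z⟫ :=
  rfl

/-- The functional of one incremental step on the admissible set `ι u₀ ≤ ι w`, where the
constraint term `|ι w − ι u₀|²_{L²₊}` is finite. -/
noncomputable def incrementalEnergy (τ : ℝ) (u₀ w : V) : ℝ :=
  1 / 2 * a w w - ⟪g, ι w⟫ + 1 / (2 * τ) * ‖ι w - ι u₀‖ ^ 2

variable {a} {τ : ℝ} {u₀ : V}

theorem incrementalEnergy_add_smul (ha : ∀ u v, a u v = a v u) (u h : V) (s : ℝ) :
    incrementalEnergy ι a g τ u₀ (u + s • h) = incrementalEnergy ι a g τ u₀ u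
      + s * (energyDifferential ι a g u h + τ⁻¹ * ⟪ι u - ι u₀, ι h⟫)
      + s ^ 2 * (1 / 2 * a h h + 1 / (2 * τ) * ‖ι h‖ ^ 2) := by
  have hshift : ι (u + s • h) - ι u₀ = (ι u - ι u₀) + s • ι h := by
    rw [map_add, map_smul]; abel
  rw [incrementalEnergy, incrementalEnergy, hshift, norm_add_sq_real, norm_smul, inner_smul_right]
  simp only [energyDifferential_apply, map_add, map_smul, LinearMap.add_apply, LinearMap.smul_apply,
    smul_eq_mul, inner_add_right, inner_smul_right, ha h u, Real.norm_eq_abs, mul_pow, sq_abs]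
  ring

theorem incrementalEnergy_variational_inequality (ha : ∀ u v, a u v = a v u) {K : Set V}
    (hK : Convex ℝ K) {u₁ z : V} (hu₁ : u₁ ∈ K) (hz : z ∈ K)
    (hmin : IsMinOn (incrementalEnergy ι a g τ u₀) K u₁) :
    0 ≤ energyDifferential ι a g u₁ (z - u₁) + τ⁻¹ * ⟪ι u₁ - ι u₀, ι (z - u₁)⟫ :=
  hmin.linear_coeff_nonneg hK hu₁ hz (incrementalEnergy_add_smul ι g ha u₁ (z - u₁))

end IncrementalEnergy

section Constrained

variable {V H : Type*} [AddCommGroup V] [Module ℝ V] [NormedAddCommGroup H] [InnerProductSpace ℝ H]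
  [PartialOrder H] [IsOrderedAddMonoid H] [PosSMulMono ℝ H]
  (ι : V →ₗ[ℝ] H) {a : LinearMap.BilinForm ℝ V} (g : H) {τ : ℝ} {u₀ u₁ : V}

theorem constrained_variational_inequality (ha : ∀ u v, a u v = a v u) (hu₁ : ι u₀ ≤ ι u₁)
    (hmin : IsMinOn (incrementalEnergy ι a g τ u₀) {w | ι u₀ ≤ ι w} u₁) {h : V}
    (hh : 0 ≤ ι h + (ι u₁ - ι u₀)) :
    0 ≤ energyDifferential ι a g u₁ h + τ⁻¹ * ⟪ι u₁ - ι u₀, ι h⟫ := by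
  have hadm : ι u₀ ≤ ι (u₁ + h) := by
    rw [map_add, ← sub_nonneg]
    convert hh using 1
    abel
  simpa using incrementalEnergy_variational_inequality ι g ha
    ((convex_Ici (ι u₀)).linear_preimage ι) hu₁ hadm hmin

theorem energyDifferential_increment (ha : ∀ u v, a u v = a v u) (hu₁ : ι u₀ ≤ ι u₁)
    (hmin : IsMinOn (incrementalEnergy ι a g τ u₀) {w | ι u₀ ≤ ι w} u₁) :
    energyDifferential ι a g u₁ (u₁ - u₀) = -(τ⁻¹ * ‖ι u₁ - ι u₀‖ ^ 2) := by
  have hd : 0 ≤ ι u₁ - ι u₀ := sub_nonneg.mpr hu₁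
  have hι : ι (u₁ - u₀) = ι u₁ - ι u₀ := map_sub ι u₁ u₀
  have hforward := constrained_variational_inequality ι g ha hu₁ hmin (h := u₁ - u₀)
    (by simpa [hι] using add_nonneg hd hd)
  have hbackward := constrained_variational_inequality ι g ha hu₁ hmin (h := -(u₁ - u₀))
    (by simp)
  simp only [map_neg, hι, inner_neg_right, real_inner_self_eq_norm_sq] at hforward hbackward
  linarith

theorem isGreatest_neg_energyDifferential (ha : ∀ u v, a u v = a v u) (hτ : 0 < τ)
    (hu₁ : ι u₀ ≤ ι u₁) (hmin : IsMinOn (incrementalEnergy ι a g τ u₀) {w | ι u₀ ≤ ι w} u₁) :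
    IsGreatest {r | ∃ z, 0 ≤ ι z ∧ ‖ι z‖ ≤ 1 ∧ r = -energyDifferential ι a g u₁ z}
      (τ⁻¹ * ‖ι u₁ - ι u₀‖) := by
  have hd : 0 ≤ ι u₁ - ι u₀ := sub_nonneg.mpr hu₁
  constructor
  · rcases eq_or_ne (ι u₁ - ι u₀) 0 with hd0 | hd0
    · exact ⟨0, by simp, by simp, by simp [hd0]⟩
    have hnd : 0 < ‖ι u₁ - ι u₀‖ := norm_pos_iff.mpr hd0
    refine ⟨‖ι u₁ - ι u₀‖⁻¹ • (u₁ - u₀), ?_, ?_, ?_⟩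
    · simpa using smul_nonneg (inv_nonneg.mpr hnd.le) hd
    · simp [norm_smul, hnd.ne']
    · rw [map_smul, energyDifferential_increment ι g ha hu₁ hmin, smul_eq_mul]
      field_simp
  · rintro r ⟨z, hz, hz1, rfl⟩
    have hvi := constrained_variational_inequality ι g ha hu₁ hmin (add_nonneg hz hd)
    have hcs : ⟪ι u₁ - ι u₀, ι z⟫ ≤ ‖ι u₁ - ι u₀‖ := calc
      _ ≤ ‖ι u₁ - ι u₀‖ * ‖ι z‖ := real_inner_le_norm _ _
      _ ≤ ‖ι u₁ - ι u₀‖ := mul_le_of_le_one_right (norm_nonneg _) hz1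
    nlinarith [inv_pos.mpr hτ]

end Constrained

open scoped Classical

/-- One step of the constrained incremental problem
`u₁ ∈ argmin { F(u) + (1/2τ)|u − u₀|²_{L²₊} : u ∈ H¹₀ }`, where `|w|_{L²₊} = ‖w‖_{L²}` if
`w ≥ 0` and `+∞` otherwise (the constrained functional takes values in `ℝ ∪ {+∞}`).  The
minimizer satisfies `u₁ ≥ u₀`, the identity
`‖u₁ − u₀‖²/τ² = −dF(u₁)[(u₁ − u₀)/τ]`, and
`‖(u₁ − u₀)/τ‖_{L²} = |∂F|_{L²₊}(u₁) = sup { −dF(u₁)[z] : z ∈ H¹₀, z ≥ 0, ‖z‖_{L²} ≤ 1 }`,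
with `F(w) = ½a(w,w) − ⟨g, w⟩` and `dF(w)[z] = a(w,z) − ⟨g, z⟩`.
`H¹₀` is a normed space `V` embedded in `L²` by `ι`. -/
theorem constrained_incremental_step
    {α : Type*} [MeasurableSpace α] (μ : Measure α)
    {V : Type*} [NormedAddCommGroup V] [NormedSpace ℝ V]
    (ι : V →L[ℝ] Lp ℝ 2 μ)
    (a : V →L[ℝ] V →L[ℝ] ℝ) (hsymm : ∀ u v : V, a u v = a v u)
    (τ : ℝ) (hτ : 0 < τ) (g : Lp ℝ 2 μ) (u₀ u₁ : V)
    (hmin : ∀ w : V,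
      (if ι u₀ ≤ ι u₁ then
          (((1/2) * a u₁ u₁ - (inner ℝ g (ι u₁) : ℝ) +
            (1/(2*τ)) * ‖ι u₁ - ι u₀‖ ^ 2 : ℝ) : WithTop ℝ)
        else ⊤) ≤
      (if ι u₀ ≤ ι w then
          (((1/2) * a w w - (inner ℝ g (ι w) : ℝ) +
            (1/(2*τ)) * ‖ι w - ι u₀‖ ^ 2 : ℝ) : WithTop ℝ)
        else ⊤)) :
    ι u₀ ≤ ι u₁ ∧
    ‖ι u₁ - ι u₀‖ ^ 2 / τ ^ 2 =
      -(a u₁ (τ⁻¹ • (u₁ - u₀)) - (inner ℝ g (ι (τ⁻¹ • (u₁ - u₀))) : ℝ)) ∧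
    ‖τ⁻¹ • (ι u₁ - ι u₀)‖ =
      sSup {r : ℝ | ∃ z : V, 0 ≤ ι z ∧ ‖ι z‖ ≤ 1 ∧
        r = -(a u₁ z - (inner ℝ g (ι z) : ℝ))} := by
  have hsymm' : ∀ u v, a.toLinearMap₁₂ u v = a.toLinearMap₁₂ v u := hsymm
  obtain ⟨hu₁, hmin'⟩ := WithTop.mem_and_isMinOn_of_forall_ite_le
    (p := fun w => ι u₀ ≤ ι w)
    (f := incrementalEnergy (ι : V →ₗ[ℝ] Lp ℝ 2 μ) a.toLinearMap₁₂ g τ u₀) ⟨u₀, le_rfl⟩ hmin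
  have hincr := energyDifferential_increment _ g hsymm' hu₁ hmin'
  simp only [ContinuousLinearMap.coe_coe] at hincr
  refine ⟨hu₁, ?_, ?_⟩
  · change _ = -energyDifferential (ι : V →ₗ[ℝ] Lp ℝ 2 μ) a.toLinearMap₁₂ g u₁ (τ⁻¹ • (u₁ - u₀))
    rw [map_smul, hincr, smul_eq_mul]
    field_simp
  · rw [norm_smul, Real.norm_of_nonneg (inv_nonneg.mpr hτ.le)]
    exact ((isGreatest_neg_energyDifferential _ g hsymm' hτ hu₁ hmin').csSup_eq).symm
end
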